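/- arXiv:2504.17963 — 7 statements merged into one kernel-verified Lean document; each statement's English description precedes it below -/
import Mathlib

section
/- Let x be a random unit vector in ℝ^d with Σ = E[xxᵀ] positive definite having minimum eigenvalue λ_min, and let γ ∈ (0,2). Then γ(2-γ)λ_min ∈ (0,1], and for any fixed vector z ∈ ℝ^d independent of x, E[‖(I - γ xxᵀ)z‖²] ≤ (1 - γ(2-γ)λ_min)‖z‖². -/
/-!
For a unit vector `x`, the map `z ↦ (I - γ xxᵀ) z` shrinks `‖z‖²` by exactly `γ(2-γ)(x ⬝ z)²`.
Averaging over `x` turns `(x ⬝ z)²` into the quadratic form `zᵀ Σ z ≥ λ_min ‖z‖²`. The bounds on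
`λ_min` come from an eigenvector `v`: `λ_min = vᵀ Σ v` is positive since `Σ` is positive definite,
and at most `1` since `vᵀ Σ v = E[(x ⬝ v)²] ≤ 1` by Cauchy–Schwarz.
-/

open Matrix MeasureTheory

section DotProduct

variable {ι R : Type*} [Fintype ι]

theorem dotProduct_sq_le_dotProduct_self_mul [CommRing R] [LinearOrder R] [IsStrictOrderedRing R]
    (x v : ι → R) : (x ⬝ᵥ v) ^ 2 ≤ (x ⬝ᵥ x) * (v ⬝ᵥ v) := by
  simpa only [dotProduct, sq] using Finset.sum_mul_sq_le_sq_mul_sq Finset.univ x v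

theorem sq_apply_le_dotProduct_self [CommRing R] [LinearOrder R] [IsStrictOrderedRing R]
    (x : ι → R) (i : ι) : x i ^ 2 ≤ x ⬝ᵥ x := by
  simpa only [dotProduct, sq] using
    Finset.single_le_sum (fun k _ => mul_self_nonneg (x k)) (Finset.mem_univ i)

theorem dotProduct_sq_eq_dotProduct_vecMulVec_mulVec [CommRing R] (x w : ι → R) :
    (x ⬝ᵥ w) ^ 2 = w ⬝ᵥ (vecMulVec x x *ᵥ w) := by
  simp [vecMulVec_mulVec, dotProduct_comm w x, sq]

theorem dotProduct_self_one_sub_smul_vecMulVec_mulVec [CommRing R] [DecidableEq ι]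
    {x : ι → R} (hx : x ⬝ᵥ x = 1) (γ : R) (z : ι → R) :
    ((1 - γ • vecMulVec x x) *ᵥ z) ⬝ᵥ ((1 - γ • vecMulVec x x) *ᵥ z) =
      z ⬝ᵥ z - γ * (2 - γ) * (x ⬝ᵥ z) ^ 2 := by
  simp only [sub_mulVec, one_mulVec, smul_mulVec, vecMulVec_mulVec, op_smul_eq_smul,
    dotProduct_sub, sub_dotProduct, smul_dotProduct, dotProduct_smul, smul_eq_mul,
    dotProduct_comm z x]
  linear_combination γ ^ 2 * (x ⬝ᵥ z) ^ 2 * hx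

end DotProduct

section SecondMoment

variable {ι Ω : Type*} [Fintype ι] [MeasurableSpace Ω] {μ : Measure Ω} {x : Ω → ι → ℝ}

theorem integrable_apply_mul_apply_of_dotProduct_self_eq_one [IsFiniteMeasure μ]
    (hx : AEMeasurable x μ) (hsphere : ∀ ω, x ω ⬝ᵥ x ω = 1) (i j : ι) :
    Integrable (fun ω => x ω i * x ω j) μ := by
  refine (integrable_const (1 : ℝ)).mono' ?_ (ae_of_all _ fun ω => ?_)
  · exact (((measurable_pi_apply i).comp_aemeasurable hx).mul
      ((measurable_pi_apply j).comp_aemeasurable hx)).aestronglyMeasurable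
  · have hi := (sq_apply_le_dotProduct_self (x ω) i).trans_eq (hsphere ω)
    have hj := (sq_apply_le_dotProduct_self (x ω) j).trans_eq (hsphere ω)
    rw [Real.norm_eq_abs, ← sq_le_one_iff_abs_le_one, mul_pow]
    exact mul_le_one₀ hi (sq_nonneg _) hj

variable (hint : ∀ i j, Integrable (fun ω => x ω i * x ω j) μ)
include hint

theorem integrable_dotProduct_sq (w : ι → ℝ) : Integrable (fun ω => (x ω ⬝ᵥ w) ^ 2) μ := by
  simp only [dotProduct_sq_eq_dotProduct_vecMulVec_mulVec, dot_mulVec_eq_sum_sum, vecMulVec_apply]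
  exact integrable_finsetSum _ fun j _ => integrable_finsetSum _ fun i _ =>
    ((hint i j).const_mul _).mul_const _

theorem integral_dotProduct_sq {S : Matrix ι ι ℝ} (hS : ∀ i j, S i j = ∫ ω, x ω i * x ω j ∂μ)
    (w : ι → ℝ) : ∫ ω, (x ω ⬝ᵥ w) ^ 2 ∂μ = w ⬝ᵥ (S *ᵥ w) := by
  simp only [dotProduct_sq_eq_dotProduct_vecMulVec_mulVec, dot_mulVec_eq_sum_sum, vecMulVec_apply]
  rw [integral_finsetSum _ fun j _ => integrable_finsetSum _ fun i _ =>
    ((hint i j).const_mul _).mul_const _]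
  refine Finset.sum_congr rfl fun j _ => ?_
  rw [integral_finsetSum _ fun i _ => ((hint i j).const_mul _).mul_const _]
  refine Finset.sum_congr rfl fun i _ => ?_
  rw [integral_mul_const, integral_const_mul, hS]

end SecondMoment

theorem integral_dotProduct_sq_le_of_dotProduct_self_eq_one {ι Ω : Type*} [Fintype ι]
    [MeasurableSpace Ω] {μ : Measure Ω} [IsProbabilityMeasure μ] {x : Ω → ι → ℝ}
    (hsphere : ∀ ω, x ω ⬝ᵥ x ω = 1) {w : ι → ℝ}
    (hint : Integrable (fun ω => (x ω ⬝ᵥ w) ^ 2) μ) :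
    ∫ ω, (x ω ⬝ᵥ w) ^ 2 ∂μ ≤ w ⬝ᵥ w := by
  have hbound : ∀ ω, (x ω ⬝ᵥ w) ^ 2 ≤ w ⬝ᵥ w := fun ω => by
    simpa [hsphere ω] using dotProduct_sq_le_dotProduct_self_mul (x ω) w
  simpa using integral_mono hint (integrable_const _) hbound

/-- Let `x` be a random unit vector in `ℝ^d` with `Σ = E[xxᵀ]` positive definite
having minimum eigenvalue `λ_min`, and let `γ ∈ (0,2)`. Then `γ(2-γ)λ_min ∈ (0,1]`,
and for any fixed `z ∈ ℝ^d`, `E[‖(I - γ xxᵀ)z‖²] ≤ (1 - γ(2-γ)λ_min)‖z‖²`. -/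
theorem lms_expected_contraction {d : ℕ} {Ω : Type*} [MeasurableSpace Ω]
    (μ : Measure Ω) [IsProbabilityMeasure μ]
    (x : Ω → Fin d → ℝ) (hmeas : Measurable x)
    (hsphere : ∀ ω, x ω ⬝ᵥ x ω = 1)
    (Sx : Matrix (Fin d) (Fin d) ℝ)
    (hS : ∀ i j, Sx i j = ∫ ω, x ω i * x ω j ∂μ)
    (hpd : Sx.PosDef)
    (lammin : ℝ)
    (heig : ∃ v : Fin d → ℝ, v ⬝ᵥ v = 1 ∧ Sx *ᵥ v = lammin • v)
    (hlow : ∀ v : Fin d → ℝ, lammin * (v ⬝ᵥ v) ≤ v ⬝ᵥ (Sx *ᵥ v))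
    (γ : ℝ) (hγ0 : 0 < γ) (hγ2 : γ < 2)
    (z : Fin d → ℝ) :
    (0 < γ * (2 - γ) * lammin ∧ γ * (2 - γ) * lammin ≤ 1) ∧
    ∫ ω, (((1 : Matrix (Fin d) (Fin d) ℝ) - γ • vecMulVec (x ω) (x ω)) *ᵥ z) ⬝ᵥ
        (((1 : Matrix (Fin d) (Fin d) ℝ) - γ • vecMulVec (x ω) (x ω)) *ᵥ z) ∂μ ≤
      (1 - γ * (2 - γ) * lammin) * (z ⬝ᵥ z) := by
  obtain ⟨v, hv1, hvS⟩ := heig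
  have hint :=
    integrable_apply_mul_apply_of_dotProduct_self_eq_one (μ := μ) hmeas.aemeasurable hsphere
  have hvSv : v ⬝ᵥ (Sx *ᵥ v) = lammin := by rw [hvS, dotProduct_smul, hv1, smul_eq_mul, mul_one]
  have hlam_pos : 0 < lammin := hvSv ▸ hpd.dotProduct_mulVec_pos fun h => by simp [h] at hv1
  have hlam_le : lammin ≤ 1 := by
    rw [← hvSv, ← hv1, ← integral_dotProduct_sq hint hS]
    exact integral_dotProduct_sq_le_of_dotProduct_self_eq_one hsphere
      (integrable_dotProduct_sq hint v)
  have hc : 0 < γ * (2 - γ) := mul_pos hγ0 (by linarith)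
  refine ⟨⟨by positivity, by nlinarith [sq_nonneg (γ - 1)]⟩, ?_⟩
  calc _ = ∫ ω, (z ⬝ᵥ z - γ * (2 - γ) * (x ω ⬝ᵥ z) ^ 2) ∂μ := by
        simp only [dotProduct_self_one_sub_smul_vecMulVec_mulVec (hsphere _)]
    _ = z ⬝ᵥ z - γ * (2 - γ) * (z ⬝ᵥ (Sx *ᵥ z)) := by
        rw [integral_sub (integrable_const _) ((integrable_dotProduct_sq hint z).const_mul _),
          integral_const_mul, integral_dotProduct_sq hint hS]
        simp
    _ ≤ (1 - γ * (2 - γ) * lammin) * (z ⬝ᵥ z) := by nlinarith [hlow z]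
end

section
/- Under the i.i.d. unit-sphere assumption with positive definite Σ_x = E[x_t x_tᵀ] and γ ∈ (0,2), the LMS iterates θ^t = θ^{t-1} - γ(x_tᵀθ^{t-1} - x_tᵀθ*)x_t with θ^0 = 0 satisfy E[‖θ^t - θ*‖²] ≤ (1 - γ(2-γ)λ_min(Σ_x))^t · ‖θ*‖². -/
open Matrix MeasureTheory ProbabilityTheory

/-!
The error `e t = θ t - θ*` follows `e (t+1) = e t - γ (x t ⬝ e t) x t`, and since `‖x t‖ = 1`
this gives `‖e (t+1)‖² = ‖e t‖² - γ (2 - γ) (x t ⬝ e t)²`. The error `e t` is a function of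
`x 0, …, x (t-1)`, hence independent of `x t`, so `E[(x t ⬝ e t)²] = E[e tᵀ Σ_x e t]`, which
is at least `λ_min E‖e t‖²`. The rate `1 - γ (2 - γ) λ_min` is nonnegative because
`γ (2 - γ) ≤ 1` and `λ_min = vᵀ Σ_x v = E[(x ⬝ v)²] ≤ 1` for a unit eigenvector `v`.
-/

section Update

variable {ι : Type*} [Fintype ι]

theorem sq_dotProduct_le_of_dotProduct_self_eq_one {x : ι → ℝ} (hx : x ⬝ᵥ x = 1)
    (v : ι → ℝ) : (x ⬝ᵥ v) ^ 2 ≤ v ⬝ᵥ v := by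
  have hx' : ∑ i, x i ^ 2 = 1 := by simpa only [dotProduct, sq] using hx
  calc (x ⬝ᵥ v) ^ 2 ≤ (∑ i, x i ^ 2) * ∑ i, v i ^ 2 :=
        Finset.sum_mul_sq_le_sq_mul_sq Finset.univ x v
    _ = v ⬝ᵥ v := by rw [hx', one_mul]; simp only [dotProduct, sq]

theorem abs_mul_apply_le_dotProduct_self (v : ι → ℝ) (i j : ι) :
    |v i * v j| ≤ v ⬝ᵥ v := by
  have hle : ∀ k, v k ^ 2 ≤ v ⬝ᵥ v := fun k =>
    Finset.single_le_sum (f := fun l => v l * v l) (fun l _ => mul_self_nonneg _)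
      (Finset.mem_univ k) |>.trans_eq' (sq _).symm
  rw [abs_mul]
  nlinarith [hle i, hle j, sq_abs (v i), sq_abs (v j), sq_nonneg (|v i| - |v j|)]

/-- The LMS recursion, written for the error `e = θ - θ*`. -/
def lmsUpdate (γ : ℝ) (x e : ι → ℝ) : ι → ℝ := e - (γ * (x ⬝ᵥ e)) • x

theorem lmsUpdate_dotProduct_self {x : ι → ℝ} (hx : x ⬝ᵥ x = 1) (γ : ℝ) (e : ι → ℝ) :
    lmsUpdate γ x e ⬝ᵥ lmsUpdate γ x e = e ⬝ᵥ e - γ * (2 - γ) * (x ⬝ᵥ e) ^ 2 := by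
  simp only [lmsUpdate, dotProduct_sub, sub_dotProduct, dotProduct_smul, smul_dotProduct,
    smul_eq_mul, hx, dotProduct_comm e x]
  ring

theorem lmsUpdate_dotProduct_self_le {x : ι → ℝ} (hx : x ⬝ᵥ x = 1) {γ : ℝ} (hγ0 : 0 ≤ γ)
    (hγ2 : γ ≤ 2) (e : ι → ℝ) : lmsUpdate γ x e ⬝ᵥ lmsUpdate γ x e ≤ e ⬝ᵥ e := by
  have : 0 ≤ γ * (2 - γ) * (x ⬝ᵥ e) ^ 2 := by have := sub_nonneg.2 hγ2; positivity
  linarith [lmsUpdate_dotProduct_self hx γ e]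

theorem dotProduct_self_le_of_lmsUpdate {x e : ℕ → ι → ℝ} (hx : ∀ t, x t ⬝ᵥ x t = 1) {γ : ℝ}
    (hγ0 : 0 ≤ γ) (hγ2 : γ ≤ 2) (he : ∀ t, e (t + 1) = lmsUpdate γ (x t) (e t)) (t : ℕ) :
    e t ⬝ᵥ e t ≤ e 0 ⬝ᵥ e 0 :=
  antitone_nat_of_succ_le (f := fun t => e t ⬝ᵥ e t)
    (fun t => (he t).symm ▸ lmsUpdate_dotProduct_self_le (hx t) hγ0 hγ2 (e t)) (Nat.zero_le t)

@[fun_prop]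
theorem Continuous.lmsUpdate {α : Type*} [TopologicalSpace α] {f g : α → ι → ℝ}
    (hf : Continuous f) (hg : Continuous g) (γ : ℝ) :
    Continuous fun a => _root_.lmsUpdate γ (f a) (g a) := by
  unfold _root_.lmsUpdate
  fun_prop

end Update

section SecondMoment

variable {ι Ω : Type*} [MeasurableSpace Ω] {μ : Measure Ω}

noncomputable def secondMoment (μ : Measure Ω) (X : Ω → ι → ℝ) : Matrix ι ι ℝ :=
  Matrix.of fun i j => ∫ ω, X ω i * X ω j ∂μ

theorem secondMoment_apply (μ : Measure Ω) (X : Ω → ι → ℝ) (i j : ι) :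
    secondMoment μ X i j = ∫ ω, X ω i * X ω j ∂μ := rfl

variable [Fintype ι]

theorem sq_dotProduct_eq_sum (x v : ι → ℝ) :
    (x ⬝ᵥ v) ^ 2 = ∑ i, ∑ j, x i * x j * (v i * v j) := by
  rw [dotProduct, sq, Finset.sum_mul_sum]
  exact Finset.sum_congr rfl fun i _ => Finset.sum_congr rfl fun j _ => by ring

theorem dotProduct_mulVec_eq_sum (A : Matrix ι ι ℝ) (v : ι → ℝ) :
    v ⬝ᵥ (A *ᵥ v) = ∑ i, ∑ j, A i j * (v i * v j) := by
  simp only [dotProduct, mulVec, Finset.mul_sum]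
  exact Finset.sum_congr rfl fun i _ => Finset.sum_congr rfl fun j _ => by ring

theorem integral_sq_dotProduct_of_indepFun {X Y : Ω → ι → ℝ} (hXY : IndepFun X Y μ)
    (hX : ∀ i j, Integrable (fun ω => X ω i * X ω j) μ)
    (hY : ∀ i j, Integrable (fun ω => Y ω i * Y ω j) μ) :
    ∫ ω, (X ω ⬝ᵥ Y ω) ^ 2 ∂μ = ∫ ω, Y ω ⬝ᵥ (secondMoment μ X *ᵥ Y ω) ∂μ := by
  have hXY' (i j : ι) : IndepFun (fun ω => X ω i * X ω j) (fun ω => Y ω i * Y ω j) μ :=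
    hXY.comp (φ := fun v : ι → ℝ => v i * v j) (ψ := fun v : ι → ℝ => v i * v j)
      (by fun_prop) (by fun_prop)
  have hprod (i j : ι) : Integrable (fun ω => X ω i * X ω j * (Y ω i * Y ω j)) μ :=
    (hXY' i j).integrable_mul (hX i j) (hY i j)
  simp only [sq_dotProduct_eq_sum, dotProduct_mulVec_eq_sum, secondMoment_apply]
  rw [integral_finsetSum _ fun i _ => integrable_finsetSum _ fun j _ => hprod i j,
    integral_finsetSum _ fun i _ => integrable_finsetSum _ fun j _ => (hY i j).const_mul _]
  refine Finset.sum_congr rfl fun i _ => ?_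
  rw [integral_finsetSum _ fun j _ => hprod i j,
    integral_finsetSum _ fun j _ => (hY i j).const_mul _]
  refine Finset.sum_congr rfl fun j _ => ?_
  rw [integral_const_mul]
  exact (hXY' i j).integral_mul_eq_mul_integral (hX i j).aestronglyMeasurable
    (hY i j).aestronglyMeasurable

theorem integrable_mul_apply_of_dotProduct_self {Y : Ω → ι → ℝ} (hY : Measurable Y)
    (hYY : Integrable (fun ω => Y ω ⬝ᵥ Y ω) μ) (i j : ι) :
    Integrable (fun ω => Y ω i * Y ω j) μ :=
  hYY.mono' (by fun_prop) (ae_of_all _ fun ω => abs_mul_apply_le_dotProduct_self (Y ω) i j)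

theorem dotProduct_mulVec_secondMoment_le [IsProbabilityMeasure μ] {X : Ω → ι → ℝ}
    (hX : Measurable X) (hunit : ∀ ω, X ω ⬝ᵥ X ω = 1) (v : ι → ℝ) :
    v ⬝ᵥ (secondMoment μ X *ᵥ v) ≤ v ⬝ᵥ v := by
  have hXX := integrable_mul_apply_of_dotProduct_self hX (μ := μ) (by simp [hunit])
  have hvv : Integrable (fun _ : Ω => v ⬝ᵥ v) μ := integrable_const _
  calc v ⬝ᵥ (secondMoment μ X *ᵥ v) = ∫ ω, (X ω ⬝ᵥ v) ^ 2 ∂μ := by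
        rw [integral_sq_dotProduct_of_indepFun (indepFun_const_right X v) hXX
          (integrable_mul_apply_of_dotProduct_self measurable_const hvv), integral_const,
          probReal_univ, one_smul]
    _ ≤ ∫ _, v ⬝ᵥ v ∂μ := integral_mono_of_nonneg (ae_of_all _ fun _ => sq_nonneg _) hvv
        (ae_of_all _ fun ω => sq_dotProduct_le_of_dotProduct_self_eq_one (hunit ω) v)
    _ = v ⬝ᵥ v := by rw [integral_const, probReal_univ, one_smul]

theorem le_one_of_mulVec_secondMoment_eq_smul [IsProbabilityMeasure μ] {X : Ω → ι → ℝ}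
    (hX : Measurable X) (hunit : ∀ ω, X ω ⬝ᵥ X ω = 1) {v : ι → ℝ} (hv : v ⬝ᵥ v = 1) {lam : ℝ}
    (hSv : secondMoment μ X *ᵥ v = lam • v) : lam ≤ 1 := by
  simpa [hSv, hv] using dotProduct_mulVec_secondMoment_le (μ := μ) hX hunit v

theorem integral_lmsUpdate_le [IsFiniteMeasure μ] {X Y : Ω → ι → ℝ} (hX : Measurable X)
    (hY : Measurable Y) (hunit : ∀ ω, X ω ⬝ᵥ X ω = 1)
    (hYY : Integrable (fun ω => Y ω ⬝ᵥ Y ω) μ) (hXY : IndepFun X Y μ) {lam : ℝ}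
    (hlow : ∀ v, lam * (v ⬝ᵥ v) ≤ v ⬝ᵥ (secondMoment μ X *ᵥ v)) {γ : ℝ} (hγ0 : 0 ≤ γ)
    (hγ2 : γ ≤ 2) :
    ∫ ω, lmsUpdate γ (X ω) (Y ω) ⬝ᵥ lmsUpdate γ (X ω) (Y ω) ∂μ ≤
      (1 - γ * (2 - γ) * lam) * ∫ ω, Y ω ⬝ᵥ Y ω ∂μ := by
  have hXX := integrable_mul_apply_of_dotProduct_self hX (μ := μ) (by simp [hunit])
  have hYij := integrable_mul_apply_of_dotProduct_self hY hYY
  have hsq : Integrable (fun ω => (X ω ⬝ᵥ Y ω) ^ 2) μ :=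
    hYY.mono' (by fun_prop) (ae_of_all _ fun ω => by
      rw [Real.norm_of_nonneg (sq_nonneg _)]
      exact sq_dotProduct_le_of_dotProduct_self_eq_one (hunit ω) _)
  have hquad : Integrable (fun ω => Y ω ⬝ᵥ (secondMoment μ X *ᵥ Y ω)) μ := by
    simp only [dotProduct_mulVec_eq_sum]
    exact integrable_finsetSum _ fun i _ =>
      integrable_finsetSum _ fun j _ => (hYij i j).const_mul _
  have hmoment : lam * ∫ ω, Y ω ⬝ᵥ Y ω ∂μ ≤ ∫ ω, (X ω ⬝ᵥ Y ω) ^ 2 ∂μ := by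
    rw [← integral_const_mul, integral_sq_dotProduct_of_indepFun hXY hXX hYij]
    exact integral_mono (hYY.const_mul lam) hquad fun ω => hlow (Y ω)
  have hc : 0 ≤ γ * (2 - γ) := mul_nonneg hγ0 (sub_nonneg.2 hγ2)
  calc ∫ ω, lmsUpdate γ (X ω) (Y ω) ⬝ᵥ lmsUpdate γ (X ω) (Y ω) ∂μ
      = ∫ ω, Y ω ⬝ᵥ Y ω ∂μ - γ * (2 - γ) * ∫ ω, (X ω ⬝ᵥ Y ω) ^ 2 ∂μ := by
        simp only [lmsUpdate_dotProduct_self (hunit _)]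
        rw [integral_sub hYY (hsq.const_mul _), integral_const_mul]
    _ ≤ (1 - γ * (2 - γ) * lam) * ∫ ω, Y ω ⬝ᵥ Y ω ∂μ := by
        nlinarith [mul_le_mul_of_nonneg_left hmoment hc]

end SecondMoment

section Past

variable {Ω β E : Type*} [mβ : MeasurableSpace β] [MeasurableSpace E]

theorem measurable_iSup_lt_of_recursion {x : ℕ → Ω → β} {e : ℕ → Ω → E} {f : E × β → E}
    (hf : Measurable f) {c : E} (h0 : ∀ ω, e 0 ω = c)
    (hsucc : ∀ t ω, e (t + 1) ω = f (e t ω, x t ω)) (t : ℕ) :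
    Measurable[⨆ i < t, mβ.comap (x i)] (e t) := by
  induction t with
  | zero => simpa only [funext h0] using measurable_const
  | succ t ih =>
    have he_past : (⨆ i < t, mβ.comap (x i)) ≤ ⨆ i < t + 1, mβ.comap (x i) :=
      biSup_mono fun i hi => hi.trans t.lt_succ_self
    have hnow : mβ.comap (x t) ≤ ⨆ i < t + 1, mβ.comap (x i) :=
      le_iSup₂ (f := fun i (_ : i < t + 1) => mβ.comap (x i)) t t.lt_succ_self
    rw [funext (hsucc t)]
    exact hf.comp ((ih.mono he_past le_rfl).prodMk ((comap_measurable (x t)).mono hnow le_rfl))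

theorem ProbabilityTheory.iIndepFun.indepFun_of_measurable_iSup_lt [MeasurableSpace Ω] {μ : Measure Ω}
    {x : ℕ → Ω → β} (hx : ∀ i, Measurable (x i)) (hindep : iIndepFun x μ) {t : ℕ}
    {Y : Ω → E} (hY : Measurable[⨆ i < t, mβ.comap (x i)] Y) : IndepFun (x t) Y μ := by
  rw [IndepFun_iff_Indep]
  have h := indep_iSup_of_disjoint (fun i => (hx i).comap_le)
    ((iIndepFun_iff_iIndep _ x μ).1 hindep) (S := {t}) (T := Set.Iio t) (by simp)
  simp only [Set.mem_singleton_iff, iSup_iSup_eq_left] at h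
  exact indep_of_indep_of_le_right h hY.comap_le

end Past

theorem lms_expected_mse_bound_general {d : ℕ} {Ω : Type*} [MeasurableSpace Ω]
    (μ : Measure Ω) [IsProbabilityMeasure μ]
    (x : ℕ → Ω → Fin d → ℝ) (hmeas : ∀ t, Measurable (x t))
    (hindep : iIndepFun x μ)
    (hsphere : ∀ t ω, x t ω ⬝ᵥ x t ω = 1)
    (Sx : Matrix (Fin d) (Fin d) ℝ)
    (hS : ∀ t i j, Sx i j = ∫ ω, x t ω i * x t ω j ∂μ)
    (lammin : ℝ)
    (heig : ∃ v : Fin d → ℝ, v ⬝ᵥ v = 1 ∧ Sx *ᵥ v = lammin • v)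
    (hlow : ∀ v : Fin d → ℝ, lammin * (v ⬝ᵥ v) ≤ v ⬝ᵥ (Sx *ᵥ v))
    (γ : ℝ) (hγ0 : 0 < γ) (hγ2 : γ < 2)
    (θstar : Fin d → ℝ)
    (θ : ℕ → Ω → Fin d → ℝ)
    (h0 : ∀ ω, θ 0 ω = 0)
    (hrec : ∀ t ω, θ (t + 1) ω =
      θ t ω - (γ * (x t ω ⬝ᵥ θ t ω - x t ω ⬝ᵥ θstar)) • x t ω) :
    ∀ t : ℕ, ∫ ω, (θ t ω - θstar) ⬝ᵥ (θ t ω - θstar) ∂μ ≤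
      (1 - γ * (2 - γ) * lammin) ^ t * (θstar ⬝ᵥ θstar) := by
  have hSx (t : ℕ) : Sx = secondMoment μ (x t) := Matrix.ext (hS t)
  set e : ℕ → Ω → Fin d → ℝ := fun t ω => θ t ω - θstar
  have he0 (ω : Ω) : e 0 ω = -θstar := by simp [e, h0]
  have hesucc (t : ℕ) (ω : Ω) : e (t + 1) ω = lmsUpdate γ (x t ω) (e t ω) := by
    simp only [e, hrec, lmsUpdate, dotProduct_sub]
    abel
  have he_past := measurable_iSup_lt_of_recursion (f := fun p => lmsUpdate γ p.2 p.1)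
    (by fun_prop) he0 hesucc
  have he_meas (t : ℕ) : Measurable (e t) :=
    (he_past t).mono (iSup₂_le fun i _ => (hmeas i).comap_le) le_rfl
  have he_bound (t : ℕ) (ω : Ω) : e t ω ⬝ᵥ e t ω ≤ θstar ⬝ᵥ θstar := by
    simpa [he0] using dotProduct_self_le_of_lmsUpdate (e := fun t => e t ω)
      (fun t => hsphere t ω) hγ0.le hγ2.le (fun t => hesucc t ω) t
  have he_int (t : ℕ) : Integrable (fun ω => e t ω ⬝ᵥ e t ω) μ :=
    .of_bound (by fun_prop) (θstar ⬝ᵥ θstar) (ae_of_all _ fun ω => by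
      rw [Real.norm_of_nonneg (by simpa using dotProduct_self_star_nonneg (e t ω))]
      exact he_bound t ω)
  have hstep (t : ℕ) : ∫ ω, e (t + 1) ω ⬝ᵥ e (t + 1) ω ∂μ ≤
      (1 - γ * (2 - γ) * lammin) * ∫ ω, e t ω ⬝ᵥ e t ω ∂μ := by
    simp only [hesucc]
    exact integral_lmsUpdate_le (hmeas t) (he_meas t) (hsphere t) (he_int t)
      (hindep.indepFun_of_measurable_iSup_lt hmeas (he_past t)) (hSx t ▸ hlow) hγ0.le hγ2.le
  have hlam : lammin ≤ 1 := by
    obtain ⟨v, hv, hSv⟩ := heig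
    exact le_one_of_mulVec_secondMoment_eq_smul (hmeas 0) (hsphere 0) hv (hSx 0 ▸ hSv)
  have hrate : 0 ≤ 1 - γ * (2 - γ) * lammin := by
    nlinarith [sq_nonneg (γ - 1), mul_nonneg (mul_nonneg hγ0.le (sub_nonneg.2 hγ2.le))
      (sub_nonneg.2 hlam)]
  have hinit : ∫ ω, e 0 ω ⬝ᵥ e 0 ω ∂μ = θstar ⬝ᵥ θstar := by simp [he0]
  intro t
  exact (le_geom (u := fun t => ∫ ω, e t ω ⬝ᵥ e t ω ∂μ) hrate t fun k _ => hstep k).trans_eq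
    (by rw [hinit])

/-- Under the i.i.d. unit-sphere assumption with positive definite `Σ_x = E[x_t x_tᵀ]`
(minimum eigenvalue `λ_min`) and `γ ∈ (0,2)`, the LMS iterates
`θ^{t+1} = θ^t - γ(x_tᵀθ^t - x_tᵀθ*)x_t` with `θ^0 = 0` satisfy
`E[‖θ^t - θ*‖²] ≤ (1 - γ(2-γ)λ_min)^t · ‖θ*‖²`. -/
theorem lms_expected_mse_bound {d : ℕ} {Ω : Type*} [MeasurableSpace Ω]
    (μ : Measure Ω) [IsProbabilityMeasure μ]
    (x : ℕ → Ω → Fin d → ℝ) (hmeas : ∀ t, Measurable (x t))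
    (hindep : iIndepFun x μ)
    (hident : ∀ s t : ℕ, IdentDistrib (x s) (x t) μ μ)
    (hsphere : ∀ t ω, x t ω ⬝ᵥ x t ω = 1)
    (Sx : Matrix (Fin d) (Fin d) ℝ)
    (hS : ∀ t i j, Sx i j = ∫ ω, x t ω i * x t ω j ∂μ)
    (hpd : Sx.PosDef)
    (lammin : ℝ)
    (heig : ∃ v : Fin d → ℝ, v ⬝ᵥ v = 1 ∧ Sx *ᵥ v = lammin • v)
    (hlow : ∀ v : Fin d → ℝ, lammin * (v ⬝ᵥ v) ≤ v ⬝ᵥ (Sx *ᵥ v))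
    (γ : ℝ) (hγ0 : 0 < γ) (hγ2 : γ < 2)
    (θstar : Fin d → ℝ)
    (θ : ℕ → Ω → Fin d → ℝ)
    (h0 : ∀ ω, θ 0 ω = 0)
    (hrec : ∀ t ω, θ (t + 1) ω =
      θ t ω - (γ * (x t ω ⬝ᵥ θ t ω - x t ω ⬝ᵥ θstar)) • x t ω) :
    ∀ t : ℕ, ∫ ω, (θ t ω - θstar) ⬝ᵥ (θ t ω - θstar) ∂μ ≤
      (1 - γ * (2 - γ) * lammin) ^ t * (θstar ⬝ᵥ θstar) :=
  lms_expected_mse_bound_general μ x hmeas hindep hsphere Sx hS lammin heig hlow γ hγ0 hγ2 θstar θ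
    h0 hrec
end

section
/- Under 2-recurring tasks (x_t = x_{t+2}) with unit-norm linearly independent x_1, x_2 and c := (x_1ᵀx_2)² ≠ 1, the iterates θ^t = θ^{t-1} - γ_t(x_tᵀθ^{t-1} - x_tᵀθ*)x_t with θ^0 = 0 and alternating stepsizes γ_t = 1 for odd t and γ_t = 1/(1-c) for even t satisfy θ^3 = θ*, where θ* is the minimum-norm solution of y_i = x_iᵀθ for i = 1,2. -/
open Matrix

/-!
Write `θ⋆ = a x₁ + b x₂` and `s = x₁ ⬝ᵥ x₂`, and track the error `θᵗ - θ⋆`, which evolves by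
`e ↦ e - γ (x ⬝ᵥ e) x`. A unit step along a unit vector `x` removes the `x`-component of the
error, so `θ¹ - θ⋆ = -b (x₂ - s x₁)`. Along `x₂` this error has component `-b (1 - s²)`, which
the stepsize `1 / (1 - s²)` cancels exactly, leaving `θ² - θ⋆ = b s x₁`; the third step,
along `x₁` again, removes it.
-/

variable {K n : Type*} [Field K] [Fintype n]

def lmsStep (γ : K) (x : n → K) (y : K) (θ : n → K) : n → K :=
  θ - (γ * (x ⬝ᵥ θ - y)) • x

theorem lmsStep_sub_target (γ : K) (x θstar θ : n → K) :
    lmsStep γ x (x ⬝ᵥ θstar) θ - θstar = (θ - θstar) - (γ * (x ⬝ᵥ (θ - θstar))) • x := by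
  rw [lmsStep, dotProduct_sub]
  abel

theorem lmsStep_one_sub_target_of_unit {x z θstar θ : n → K} (hx : x ⬝ᵥ x = 1) {α β : K}
    (he : θ - θstar = α • x + β • z) :
    lmsStep 1 x (x ⬝ᵥ θstar) θ - θstar = β • (z - (x ⬝ᵥ z) • x) := by
  rw [lmsStep_sub_target, he]
  simp only [dotProduct_add, dotProduct_smul, smul_eq_mul, hx]
  module

theorem lmsStep_sub_target_of_orthogonalized {x₁ x₂ θstar θ : n → K} (hx₂ : x₂ ⬝ᵥ x₂ = 1)
    (hs : (x₁ ⬝ᵥ x₂) ^ 2 ≠ 1) {β : K} (he : θ - θstar = β • (x₂ - (x₁ ⬝ᵥ x₂) • x₁)) :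
    lmsStep (1 / (1 - (x₁ ⬝ᵥ x₂) ^ 2)) x₂ (x₂ ⬝ᵥ θstar) θ - θstar
      = (-(β * (x₁ ⬝ᵥ x₂))) • x₁ := by
  have hs' : 1 - (x₁ ⬝ᵥ x₂) ^ 2 ≠ 0 := sub_ne_zero.mpr hs.symm
  rw [lmsStep_sub_target, he]
  simp only [dotProduct_smul, dotProduct_sub, smul_eq_mul, hx₂, dotProduct_comm x₂ x₁]
  match_scalars
  · field_simp
    ring
  · ring

theorem alternating_stepsize_converges_at_three_general {d : ℕ} (x₁ x₂ : Fin d → ℝ)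
    (h1 : x₁ ⬝ᵥ x₁ = 1) (h2 : x₂ ⬝ᵥ x₂ = 1)
    (c : ℝ) (hc : c = (x₁ ⬝ᵥ x₂) ^ 2) (hc1 : c ≠ 1)
    (y₁ y₂ : ℝ) (θstar : Fin d → ℝ)
    (hstar_span : θstar ∈ Submodule.span ℝ {x₁, x₂})
    (hy1 : y₁ = x₁ ⬝ᵥ θstar) (hy2 : y₂ = x₂ ⬝ᵥ θstar)
    (θ0 θ1 θ2 θ3 : Fin d → ℝ)
    (h0 : θ0 = 0)
    (hθ1 : θ1 = θ0 - ((1 : ℝ) * (x₁ ⬝ᵥ θ0 - y₁)) • x₁)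
    (hθ2 : θ2 = θ1 - ((1 / (1 - c)) * (x₂ ⬝ᵥ θ1 - y₂)) • x₂)
    (hθ3 : θ3 = θ2 - ((1 : ℝ) * (x₁ ⬝ᵥ θ2 - y₁)) • x₁) :
    θ3 = θstar := by
  obtain ⟨a, b, rfl⟩ := Submodule.mem_span_pair.mp hstar_span
  subst hc hy1 hy2
  have e0 : θ0 - (a • x₁ + b • x₂) = (-a) • x₁ + (-b) • x₂ := by
    rw [h0]
    module
  have e1 : θ1 - (a • x₁ + b • x₂) = (-b) • (x₂ - (x₁ ⬝ᵥ x₂) • x₁) := by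
    rw [hθ1]
    exact lmsStep_one_sub_target_of_unit h1 e0
  have e2 : θ2 - (a • x₁ + b • x₂) = (-(-b * (x₁ ⬝ᵥ x₂))) • x₁ + (0 : ℝ) • x₂ := by
    rw [hθ2, zero_smul, add_zero]
    exact lmsStep_sub_target_of_orthogonalized h2 hc1 e1
  have e3 : θ3 - (a • x₁ + b • x₂) = 0 := by
    rw [hθ3, ← zero_smul ℝ (x₂ - (x₁ ⬝ᵥ x₂) • x₁)]
    exact lmsStep_one_sub_target_of_unit h1 e2
  exact sub_eq_zero.mp e3

/-- Under 2-recurring tasks (`x₃ = x₁`) with unit-norm linearly independent `x₁, x₂` and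
`c := (x₁ᵀx₂)² ≠ 1`, the LMS-type iterates `θ^t = θ^{t-1} - γ_t(x_tᵀθ^{t-1} - y_t)x_t`
with `θ^0 = 0` and alternating stepsizes `γ_t = 1` for odd `t`, `γ_t = 1/(1-c)` for even `t`,
satisfy `θ^3 = θ*`, where `θ*` is the minimum-norm solution of `y_i = x_iᵀθ`, `i = 1,2`
(i.e. the unique solution lying in `Span(x₁, x₂)`). -/
theorem alternating_stepsize_converges_at_three {d : ℕ} (x₁ x₂ : Fin d → ℝ)
    (h1 : x₁ ⬝ᵥ x₁ = 1) (h2 : x₂ ⬝ᵥ x₂ = 1)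
    (hli : LinearIndependent ℝ ![x₁, x₂])
    (c : ℝ) (hc : c = (x₁ ⬝ᵥ x₂) ^ 2) (hc1 : c ≠ 1)
    (y₁ y₂ : ℝ) (θstar : Fin d → ℝ)
    (hstar_span : θstar ∈ Submodule.span ℝ {x₁, x₂})
    (hy1 : y₁ = x₁ ⬝ᵥ θstar) (hy2 : y₂ = x₂ ⬝ᵥ θstar)
    (θ0 θ1 θ2 θ3 : Fin d → ℝ)
    (h0 : θ0 = 0)
    (hθ1 : θ1 = θ0 - ((1 : ℝ) * (x₁ ⬝ᵥ θ0 - y₁)) • x₁)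
    (hθ2 : θ2 = θ1 - ((1 / (1 - c)) * (x₂ ⬝ᵥ θ1 - y₂)) • x₂)
    (hθ3 : θ3 = θ2 - ((1 : ℝ) * (x₁ ⬝ᵥ θ2 - y₁)) • x₁) :
    θ3 = θstar :=
  alternating_stepsize_converges_at_three_general x₁ x₂ h1 h2 c hc hc1 y₁ y₂ θstar hstar_span hy1
    hy2 θ0 θ1 θ2 θ3 h0 hθ1 hθ2 hθ3
end

section
/- The iterates of APA† (θ^t = argmin ‖θ - θ^{t-1}‖² s.t. y_{:t} = X_{:t}ᵀθ) with θ^0 = 0 coincide for every t with the minimum-norm solution θ̂^t = argmin ‖θ‖² s.t. y_{:t} = X_{:t}ᵀθ. -/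
/-!
Each projection step moves `θ` by a vector orthogonal to the null space of the constraints
it enforces (first-order optimality of the projection). The null spaces shrink as constraints
are added, so by induction `θ^t` is orthogonal to the null space of the first `t` constraints,
i.e. it lies in their row space. A feasible point orthogonal to the null space is the
minimum-norm solution, by Pythagoras.
-/

section

variable {n : Type*} [Fintype n]

theorem dotProduct_eq_zero_of_forall_le_add_smul {u w : n → ℝ}
    (h : ∀ c : ℝ, u ⬝ᵥ u ≤ (u + c • w) ⬝ᵥ (u + c • w)) : u ⬝ᵥ w = 0 := by
  have hquad : ∀ c : ℝ, 0 ≤ (w ⬝ᵥ w) * (c * c) + 2 * (u ⬝ᵥ w) * c + 0 := fun c => by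
    have hc := h c
    simp only [add_dotProduct, dotProduct_add, smul_dotProduct, dotProduct_smul,
      dotProduct_comm w u, smul_eq_mul] at hc
    linarith
  have hdisc := discrim_le_zero hquad
  rw [discrim] at hdisc
  nlinarith [sq_nonneg (u ⬝ᵥ w)]

def IsSolution (x : ℕ → n → ℝ) (y : ℕ → ℝ) (t : ℕ) (v : n → ℝ) : Prop :=
  ∀ i < t, x i ⬝ᵥ v = y i

variable {x : ℕ → n → ℝ} {y : ℕ → ℝ} {s t : ℕ} {p q u v w : n → ℝ}

theorem IsSolution.mono (hst : s ≤ t) (hv : IsSolution x y t v) : IsSolution x y s v :=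
  fun i hi => hv i (hi.trans_le hst)

theorem IsSolution.sub (hu : IsSolution x y t u) (hv : IsSolution x y t v) :
    IsSolution x 0 t (u - v) := fun i hi => by
  rw [dotProduct_sub, hu i hi, hv i hi, sub_self, Pi.zero_apply]

theorem IsSolution.add_smul (hv : IsSolution x y t v) (hw : IsSolution x 0 t w) (c : ℝ) :
    IsSolution x y t (v + c • w) := fun i hi => by
  rw [dotProduct_add, dotProduct_smul, hv i hi, hw i hi, Pi.zero_apply, smul_zero, add_zero]

-- `p` is the projection of `q` onto the solutions, and `p + c • w` is a competitor for every `c`.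
theorem IsSolution.sub_dotProduct_eq_zero_of_isProj (hp : IsSolution x y t p)
    (hmin : ∀ v, IsSolution x y t v → (p - q) ⬝ᵥ (p - q) ≤ (v - q) ⬝ᵥ (v - q))
    (hw : IsSolution x 0 t w) : (p - q) ⬝ᵥ w = 0 :=
  dotProduct_eq_zero_of_forall_le_add_smul fun c => by
    simpa only [add_sub_right_comm] using hmin _ (hp.add_smul hw c)

theorem IsSolution.dotProduct_self_le (hp : IsSolution x y t p)
    (horth : ∀ w, IsSolution x 0 t w → p ⬝ᵥ w = 0) (hv : IsSolution x y t v) :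
    p ⬝ᵥ p ≤ v ⬝ᵥ v := by
  have hpv : p ⬝ᵥ (v - p) = 0 := horth _ (hv.sub hp)
  have hpyth : v ⬝ᵥ v = p ⬝ᵥ p + (v - p) ⬝ᵥ (v - p) := by
    conv_lhs => rw [← add_sub_cancel p v]
    rw [add_dotProduct, dotProduct_add, dotProduct_add, hpv, dotProduct_comm (v - p) p, hpv]
    ring
  rw [hpyth]
  simpa using dotProduct_self_star_nonneg (v - p)

theorem isSolution_and_orthogonal_of_isProj {T : ℕ} {θ : ℕ → n → ℝ} (h0 : θ 0 = 0)
    (hfeas : ∀ t < T, IsSolution x y (t + 1) (θ (t + 1)))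
    (hmin : ∀ t < T, ∀ v, IsSolution x y (t + 1) v →
      (θ (t + 1) - θ t) ⬝ᵥ (θ (t + 1) - θ t) ≤ (v - θ t) ⬝ᵥ (v - θ t)) :
    ∀ t ≤ T, IsSolution x y t (θ t) ∧ ∀ w, IsSolution x 0 t w → θ t ⬝ᵥ w = 0 := by
  intro t ht
  induction t with
  | zero => exact ⟨fun i hi => absurd hi i.not_lt_zero, fun w _ => by rw [h0, zero_dotProduct]⟩
  | succ t ih =>
    refine ⟨hfeas t ht, fun w hw => ?_⟩
    have hstep := (hfeas t ht).sub_dotProduct_eq_zero_of_isProj (hmin t ht) hw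
    have hprev := (ih (Nat.le_of_succ_le ht)).2 w (hw.mono t.le_succ)
    rw [sub_dotProduct, hprev, sub_zero] at hstep
    exact hstep

end

theorem apa_dagger_is_min_norm_general {d T : ℕ} (x : ℕ → Fin d → ℝ) (y : ℕ → ℝ)
    (θ : ℕ → Fin d → ℝ) (h0 : θ 0 = 0)
    (hfeas : ∀ t < T, ∀ i < t + 1, x i ⬝ᵥ θ (t + 1) = y i)
    (hmin : ∀ t < T, ∀ v : Fin d → ℝ, (∀ i < t + 1, x i ⬝ᵥ v = y i) →
      (θ (t + 1) - θ t) ⬝ᵥ (θ (t + 1) - θ t) ≤ (v - θ t) ⬝ᵥ (v - θ t)) :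
    ∀ t ≤ T, (∀ i < t, x i ⬝ᵥ θ t = y i) ∧
      (∀ v : Fin d → ℝ, (∀ i < t, x i ⬝ᵥ v = y i) → θ t ⬝ᵥ θ t ≤ v ⬝ᵥ v) := by
  intro t ht
  obtain ⟨hsol, horth⟩ := isSolution_and_orthogonal_of_isProj h0 hfeas hmin t ht
  exact ⟨hsol, fun _ hv => hsol.dotProduct_self_le horth hv⟩

/-- The iterates of APA† (`θ^{t+1} = argmin ‖θ - θ^t‖²  s.t.  x_iᵀθ = y_i  ∀ i ≤ t`)
with `θ^0 = 0`, for a consistent linear system (`y_i = x_iᵀθ*`) with linearly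
independent data, coincide at every `t ≤ T` with the minimum-norm solution
`θ̂^t = argmin ‖θ‖²  s.t.  x_iᵀθ = y_i  ∀ i < t`. -/
theorem apa_dagger_is_min_norm {d T : ℕ} (x : ℕ → Fin d → ℝ) (y : ℕ → ℝ)
    (hli : LinearIndependent ℝ (fun i : Fin T => x i))
    (θstar : Fin d → ℝ) (hy : ∀ i, y i = x i ⬝ᵥ θstar)
    (θ : ℕ → Fin d → ℝ) (h0 : θ 0 = 0)
    (hfeas : ∀ t < T, ∀ i < t + 1, x i ⬝ᵥ θ (t + 1) = y i)
    (hmin : ∀ t < T, ∀ v : Fin d → ℝ, (∀ i < t + 1, x i ⬝ᵥ v = y i) →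
      (θ (t + 1) - θ t) ⬝ᵥ (θ (t + 1) - θ t) ≤ (v - θ t) ⬝ᵥ (v - θ t)) :
    ∀ t ≤ T, (∀ i < t, x i ⬝ᵥ θ t = y i) ∧
      (∀ v : Fin d → ℝ, (∀ i < t, x i ⬝ᵥ v = y i) → θ t ⬝ᵥ θ t ≤ v ⬝ᵥ v) :=
  apa_dagger_is_min_norm_general x y θ h0 hfeas hmin
end

section
/- The ICL recursion θ^t = θ^{t-1} - ((x_tᵀθ^{t-1} - y_t)/‖P_{t-1}x_t‖²)·P_{t-1}x_t with θ^0 = 0 solves, at each t, the problem of minimizing (y_t - x_tᵀθ)² subject to y_i = x_iᵀθ for all i < t; in particular x_tᵀθ^t = y_t and x_iᵀθ^t = y_i for all i < t. -/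
/-! The direction `P_t x_t` is orthogonal to `x_0, …, x_{t-1}`, so a step along it keeps the old
constraints. Since `x_t - P_t x_t` lies in their span, `x_tᵀ P_t x_t = ‖P_t x_t‖²`, which is
nonzero by linear independence; hence the step length makes `x_tᵀθ^{t+1} = y_t` exactly. -/

open Matrix

section DotProduct

variable {R n : Type*} [CommRing R] [Fintype n]

lemma dotProduct_eq_zero_of_mem_span {s : Set (n → R)} {v w : n → R}
    (hs : ∀ u ∈ s, u ⬝ᵥ v = 0) (hw : w ∈ Submodule.span R s) : w ⬝ᵥ v = 0 := by
  induction hw using Submodule.span_induction with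
  | mem u hu => exact hs u hu
  | zero => exact zero_dotProduct v
  | add a b _ _ ha hb => rw [add_dotProduct, ha, hb, add_zero]
  | smul c a _ ha => rw [smul_dotProduct, ha, smul_zero]

lemma dotProduct_eq_dotProduct_self_of_sub_mem_span {s : Set (n → R)} {v p : n → R}
    (hperp : ∀ u ∈ s, u ⬝ᵥ p = 0) (hres : v - p ∈ Submodule.span R s) :
    v ⬝ᵥ p = p ⬝ᵥ p := by
  have h := dotProduct_eq_zero_of_mem_span hperp hres
  rwa [sub_dotProduct, sub_eq_zero] at h

end DotProduct

lemma LinearIndependent.notMem_span_setOf_lt {R M : Type*} [Ring R] [Nontrivial R]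
    [AddCommGroup M] [Module R M] {T t : ℕ} {x : ℕ → M}
    (hli : LinearIndependent R (fun i : Fin T => x i)) (ht : t < T) :
    x t ∉ Submodule.span R {u | ∃ j < t, u = x j} := by
  have hset : {u | ∃ j < t, u = x j} = (fun i : Fin T => x i) '' {i | (i : ℕ) < t} := by
    ext u
    constructor
    · rintro ⟨j, hj, rfl⟩
      exact ⟨⟨j, hj.trans ht⟩, hj, rfl⟩
    · rintro ⟨i, hi, rfl⟩
      exact ⟨i, hi, rfl⟩
  rw [hset]
  exact hli.notMem_span_image (x := ⟨t, ht⟩) (by simp)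

section ProjectionStep

variable {n : Type*} [Fintype n] {s : Set (n → ℝ)} {v p : n → ℝ}

lemma dotProduct_sub_smul_projection (hperp : ∀ u ∈ s, u ⬝ᵥ p = 0)
    (hres : v - p ∈ Submodule.span ℝ s) (hv : v ∉ Submodule.span ℝ s) (θ : n → ℝ) (b : ℝ) :
    v ⬝ᵥ (θ - ((v ⬝ᵥ θ - b) / (p ⬝ᵥ p)) • p) = b ∧
      ∀ u ∈ s, u ⬝ᵥ (θ - ((v ⬝ᵥ θ - b) / (p ⬝ᵥ p)) • p) = u ⬝ᵥ θ := by
  have hp : p ⬝ᵥ p ≠ 0 := by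
    rw [Ne, dotProduct_self_eq_zero]
    rintro rfl
    exact hv (by simpa using hres)
  refine ⟨?_, fun u hu => ?_⟩
  · rw [dotProduct_sub, dotProduct_smul, dotProduct_eq_dotProduct_self_of_sub_mem_span hperp hres,
      smul_eq_mul, div_mul_cancel₀ _ hp]
    ring
  · rw [dotProduct_sub, dotProduct_smul, hperp u hu, smul_zero, sub_zero]

end ProjectionStep

theorem icl_recursion_solves_general {d T : ℕ} (x : ℕ → Fin d → ℝ) (y : ℕ → ℝ)
    (hli : LinearIndependent ℝ (fun i : Fin T => x i))
    (P : ℕ → Matrix (Fin d) (Fin d) ℝ)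
    (hP1 : ∀ t (v : Fin d → ℝ) j, j < t → x j ⬝ᵥ (P t *ᵥ v) = 0)
    (hP2 : ∀ t (v : Fin d → ℝ),
      v - P t *ᵥ v ∈ Submodule.span ℝ {u : Fin d → ℝ | ∃ j < t, u = x j})
    (θ : ℕ → Fin d → ℝ)
    (hrec : ∀ t < T, θ (t + 1) =
      θ t - ((x t ⬝ᵥ θ t - y t) / ((P t *ᵥ x t) ⬝ᵥ (P t *ᵥ x t))) • (P t *ᵥ x t)) :
    ∀ t < T, ∀ i < t + 1, x i ⬝ᵥ θ (t + 1) = y i := by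
  have hperp : ∀ t, ∀ u ∈ {u : Fin d → ℝ | ∃ j < t, u = x j}, u ⬝ᵥ (P t *ᵥ x t) = 0 := by
    rintro t _ ⟨j, hj, rfl⟩
    exact hP1 t _ j hj
  have solves : ∀ t ≤ T, ∀ i < t, x i ⬝ᵥ θ t = y i := by
    intro t
    induction t with
    | zero => simp
    | succ t ih =>
      intro ht i hi
      obtain ⟨hnew, hold⟩ := dotProduct_sub_smul_projection (hperp t) (hP2 t (x t))
        (hli.notMem_span_setOf_lt ht) (θ t) (y t)
      rw [hrec t ht]
      rcases Nat.lt_succ_iff_lt_or_eq.mp hi with hi | rfl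
      · rw [hold _ ⟨i, hi, rfl⟩, ih (Nat.le_of_succ_le ht) i hi]
      · exact hnew
  exact fun t ht => solves (t + 1) ht

/-- The ICL recursion `θ^{t+1} = θ^t - ((x_tᵀθ^t - y_t)/‖P_t x_t‖²)·P_t x_t` with
`θ^0 = 0`, where `P_t` is the orthogonal projection onto `Span(x_0,...,x_{t-1})^⊥`,
solves at each step the problem of minimizing `(y_t - x_tᵀθ)²` subject to
`x_iᵀθ = y_i` for all `i < t`: in particular `x_tᵀθ^{t+1} = y_t` and
`x_iᵀθ^{t+1} = y_i` for all `i < t`. -/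
theorem icl_recursion_solves {d T : ℕ} (x : ℕ → Fin d → ℝ) (y : ℕ → ℝ)
    (hli : LinearIndependent ℝ (fun i : Fin T => x i))
    (θstar : Fin d → ℝ) (hy : ∀ i, y i = x i ⬝ᵥ θstar)
    (P : ℕ → Matrix (Fin d) (Fin d) ℝ)
    (hP1 : ∀ t (v : Fin d → ℝ) j, j < t → x j ⬝ᵥ (P t *ᵥ v) = 0)
    (hP2 : ∀ t (v : Fin d → ℝ),
      v - P t *ᵥ v ∈ Submodule.span ℝ {u : Fin d → ℝ | ∃ j < t, u = x j})
    (θ : ℕ → Fin d → ℝ) (h0 : θ 0 = 0)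
    (hrec : ∀ t < T, θ (t + 1) =
      θ t - ((x t ⬝ᵥ θ t - y t) / ((P t *ᵥ x t) ⬝ᵥ (P t *ᵥ x t))) • (P t *ᵥ x t)) :
    ∀ t < T, ∀ i < t + 1, x i ⬝ᵥ θ (t + 1) = y i :=
  icl_recursion_solves_general x y hli P hP1 hP2 θ hrec
end

section
/- The ICL iterates θ^t (defined by θ^0 = 0 and θ^t = θ^{t-1} - ((x_tᵀθ^{t-1} - y_t)/‖P_{t-1}x_t‖²)P_{t-1}x_t) satisfy θ^t ∈ Span(x_1,...,x_t) for every t, and hence θ^t equals the minimum-norm solution of y_{:t} = X_{:t}ᵀθ. -/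
open Matrix



private lemma span_dot' {d : ℕ} {s : Set (Fin d → ℝ)} {w : Fin d → ℝ}
    (h : ∀ u ∈ s, u ⬝ᵥ w = 0) : ∀ v ∈ Submodule.span ℝ s, v ⬝ᵥ w = 0 := by
  intro v hv
  induction hv using Submodule.span_induction with
  | mem u hu => exact h u hu
  | zero => simp
  | add a b _ _ ha hb => simp [add_dotProduct, ha, hb]
  | smul c a _ ha => simp [smul_dotProduct, ha]

/-- The ICL iterates (`θ^0 = 0`,
`θ^{t+1} = θ^t - ((x_tᵀθ^t - y_t)/‖P_t x_t‖²)·P_t x_t`) satisfy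
`θ^t ∈ Span(x_0,...,x_{t-1})` for every `t`, and hence `θ^t` equals the minimum-norm
solution of the constraints `x_iᵀθ = y_i`, `i < t`. -/
theorem icl_in_span_and_min_norm {d T : ℕ} (x : ℕ → Fin d → ℝ) (y : ℕ → ℝ)
    (hli : LinearIndependent ℝ (fun i : Fin T => x i))
    (θstar : Fin d → ℝ) (hy : ∀ i, y i = x i ⬝ᵥ θstar)
    (P : ℕ → Matrix (Fin d) (Fin d) ℝ)
    (hP1 : ∀ t (v : Fin d → ℝ) j, j < t → x j ⬝ᵥ (P t *ᵥ v) = 0)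
    (hP2 : ∀ t (v : Fin d → ℝ),
      v - P t *ᵥ v ∈ Submodule.span ℝ {u : Fin d → ℝ | ∃ j < t, u = x j})
    (θ : ℕ → Fin d → ℝ) (h0 : θ 0 = 0)
    (hrec : ∀ t < T, θ (t + 1) =
      θ t - ((x t ⬝ᵥ θ t - y t) / ((P t *ᵥ x t) ⬝ᵥ (P t *ᵥ x t))) • (P t *ᵥ x t)) :
    ∀ t ≤ T, θ t ∈ Submodule.span ℝ {u : Fin d → ℝ | ∃ j < t, u = x j} ∧
      (∀ i < t, x i ⬝ᵥ θ t = y i) ∧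
      (∀ v : Fin d → ℝ, (∀ i < t, x i ⬝ᵥ v = y i) → θ t ⬝ᵥ θ t ≤ v ⬝ᵥ v) := by
  -- First, span membership and constraints by induction
  have main : ∀ t ≤ T, θ t ∈ Submodule.span ℝ {u : Fin d → ℝ | ∃ j < t, u = x j} ∧
      (∀ i < t, x i ⬝ᵥ θ t = y i) := by
    intro t
    induction t with
    | zero =>
      intro _
      refine ⟨by simp [h0], fun i hi => absurd hi (Nat.not_lt_zero i)⟩
    | succ t ih =>
      intro ht
      have htT : t < T := ht
      obtain ⟨hspan, hcon⟩ := ih (le_of_lt htT)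
      have hmono : Submodule.span ℝ {u : Fin d → ℝ | ∃ j < t, u = x j} ≤
          Submodule.span ℝ {u : Fin d → ℝ | ∃ j < t + 1, u = x j} := by
        apply Submodule.span_mono
        rintro u ⟨j, hj, rfl⟩
        exact ⟨j, Nat.lt_succ_of_lt hj, rfl⟩
      -- P t *ᵥ x t ∈ span (x_0..x_t)
      have hPspan : P t *ᵥ x t ∈
          Submodule.span ℝ {u : Fin d → ℝ | ∃ j < t + 1, u = x j} := by
        have h1 : x t ∈ Submodule.span ℝ {u : Fin d → ℝ | ∃ j < t + 1, u = x j} :=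
          Submodule.subset_span ⟨t, Nat.lt_succ_self t, rfl⟩
        have h2 := hmono (hP2 t (x t))
        have : P t *ᵥ x t = x t - (x t - P t *ᵥ x t) := by ring_nf
        rw [this]
        exact Submodule.sub_mem _ h1 h2
      -- key: x t ⬝ᵥ (P t *ᵥ x t) = (P t *ᵥ x t) ⬝ᵥ (P t *ᵥ x t)
      have hkey : x t ⬝ᵥ (P t *ᵥ x t) = (P t *ᵥ x t) ⬝ᵥ (P t *ᵥ x t) := by
        have h2 : (x t - P t *ᵥ x t) ⬝ᵥ (P t *ᵥ x t) = 0 := by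
          refine span_dot' ?_ _ (hP2 t (x t))
          rintro u ⟨j, hj, rfl⟩
          exact hP1 t (x t) j hj
        have := sub_dotProduct (x t) (P t *ᵥ x t) (P t *ᵥ x t)
        rw [h2] at this
        linarith
      -- nonzero denominator
      have hN : (P t *ᵥ x t) ⬝ᵥ (P t *ᵥ x t) ≠ 0 := by
        intro h
        have hPz : P t *ᵥ x t = 0 := dotProduct_self_eq_zero.mp h
        have hxspan : x t ∈ Submodule.span ℝ {u : Fin d → ℝ | ∃ j < t, u = x j} := by
          have := hP2 t (x t); rwa [hPz, sub_zero] at this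
        -- contradicts linear independence
        have hle : Submodule.span ℝ {u : Fin d → ℝ | ∃ j < t, u = x j} ≤
            Submodule.span ℝ ((fun i : Fin T => x i) '' {i : Fin T | (i : ℕ) < t}) := by
          apply Submodule.span_le.mpr
          rintro u ⟨j, hj, rfl⟩
          exact Submodule.subset_span ⟨⟨j, lt_trans hj htT⟩, hj, rfl⟩
        have hnot := hli.notMem_span_image (s := {i : Fin T | (i : ℕ) < t})
          (x := ⟨t, htT⟩) (by simp)
        exact hnot (hle hxspan)
      have hrect := hrec t htT
      constructor
      · rw [hrect]
        exact Submodule.sub_mem _ (hmono hspan) (Submodule.smul_mem _ _ hPspan)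
      · intro i hi
        rcases Nat.lt_succ_iff_lt_or_eq.mp hi with hi' | rfl
        · rw [hrect]
          simp [sub_dotProduct, dotProduct_sub, dotProduct_smul, hP1 t (x t) i hi',
            hcon i hi']
        · rw [hrect]
          rw [dotProduct_sub, dotProduct_smul, smul_eq_mul, hkey, div_mul_cancel₀ _ hN]
          ring
  intro t ht
  obtain ⟨hspan, hcon⟩ := main t ht
  refine ⟨hspan, hcon, ?_⟩
  intro v hv
  have horth : θ t ⬝ᵥ (v - θ t) = 0 := by
    refine span_dot' ?_ _ hspan
    rintro u ⟨j, hj, rfl⟩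
    rw [dotProduct_sub, hv j hj, hcon j hj, sub_self]
  have hnn : 0 ≤ (v - θ t) ⬝ᵥ (v - θ t) := by
    refine Finset.sum_nonneg fun i _ => mul_self_nonneg _
  have hexp : v ⬝ᵥ v = θ t ⬝ᵥ θ t + 2 * (θ t ⬝ᵥ (v - θ t)) + (v - θ t) ⬝ᵥ (v - θ t) := by
    have hv' : v = θ t + (v - θ t) := by ring_nf
    calc v ⬝ᵥ v = (θ t + (v - θ t)) ⬝ᵥ (θ t + (v - θ t)) := by rw [← hv']
      _ = _ := by
        rw [add_dotProduct, dotProduct_add, dotProduct_add, dotProduct_comm (v - θ t) (θ t)]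
        ring
  rw [hexp, horth]
  linarith
end

section
/- For the ORFit update θ^t = θ^{t-1} - (1/(x_tᵀP_{t-1}x_t))·P_{t-1}x_t(x_tᵀθ^{t-1} - y_t), the a posteriori error vanishes: x_tᵀθ^t = y_t; moreover for every previous index i < t, x_iᵀθ^t = x_iᵀθ^{t-1}. -/
open Matrix

/-!
The update moves `θ` along `u = P x_t`. Since `x_t ⬝ᵥ u ≠ 0`, the step length is exactly the one
that cancels the residual `x_t ⬝ᵥ θ - y`; and since `x_i ᵥ* P = 0` for `i < t`, each earlier `x_i`
is orthogonal to `u`, so its prediction is unchanged.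
-/

section RankOneCorrection

variable {n K : Type*} [Fintype n] [Field K]

theorem dotProduct_sub_smul_residual {a u : n → K} (hu : a ⬝ᵥ u ≠ 0) (θ : n → K) (y : K) :
    a ⬝ᵥ (θ - ((a ⬝ᵥ u)⁻¹ * (a ⬝ᵥ θ - y)) • u) = y := by
  rw [dotProduct_sub, dotProduct_smul, smul_eq_mul, mul_right_comm, inv_mul_cancel₀ hu, one_mul,
    sub_sub_cancel]

theorem dotProduct_sub_smul_of_dotProduct_eq_zero {a u : n → K} (hu : a ⬝ᵥ u = 0) (θ : n → K)
    (c : K) : a ⬝ᵥ (θ - c • u) = a ⬝ᵥ θ := by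
  rw [dotProduct_sub, dotProduct_smul, hu, smul_zero, sub_zero]

end RankOneCorrection

theorem orfit_update_properties_general {d : ℕ} (x : ℕ → Fin d → ℝ) (t : ℕ) (y : ℝ)
    (P : Matrix (Fin d) (Fin d) ℝ)
    (horth : ∀ i < t, x i ᵥ* P = 0)
    (hne : x t ⬝ᵥ (P *ᵥ x t) ≠ 0)
    (θprev θnew : Fin d → ℝ)
    (hθ : θnew = θprev - ((x t ⬝ᵥ (P *ᵥ x t))⁻¹ * (x t ⬝ᵥ θprev - y)) • (P *ᵥ x t)) :
    x t ⬝ᵥ θnew = y ∧ ∀ i < t, x i ⬝ᵥ θnew = x i ⬝ᵥ θprev := by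
  subst hθ
  refine ⟨dotProduct_sub_smul_residual hne θprev y, fun i hi => ?_⟩
  have hperp : x i ⬝ᵥ (P *ᵥ x t) = 0 := by
    rw [dotProduct_mulVec, horth i hi, zero_dotProduct]
  exact dotProduct_sub_smul_of_dotProduct_eq_zero hperp θprev _

/-- For the ORFit update
`θ^t = θ^{t-1} - (1/(x_tᵀ P x_t))·P x_t (x_tᵀθ^{t-1} - y_t)`, where `P` is the
orthogonal projection onto `Span(x_0,...,x_{t-1})^⊥` (so `P² = P`, `Pᵀ = P`,
`x_iᵀP = 0` for `i < t`), the a posteriori error vanishes: `x_tᵀθ^t = y_t`;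
moreover for every previous index `i < t`, `x_iᵀθ^t = x_iᵀθ^{t-1}`. -/
theorem orfit_update_properties {d : ℕ} (x : ℕ → Fin d → ℝ) (t : ℕ) (y : ℝ)
    (P : Matrix (Fin d) (Fin d) ℝ)
    (hsym : Pᵀ = P) (hidem : P * P = P)
    (horth : ∀ i < t, x i ᵥ* P = 0)
    (hne : x t ⬝ᵥ (P *ᵥ x t) ≠ 0)
    (θprev θnew : Fin d → ℝ)
    (hθ : θnew = θprev - ((x t ⬝ᵥ (P *ᵥ x t))⁻¹ * (x t ⬝ᵥ θprev - y)) • (P *ᵥ x t)) :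
    x t ⬝ᵥ θnew = y ∧ ∀ i < t, x i ⬝ᵥ θnew = x i ⬝ᵥ θprev :=
  orfit_update_properties_general x t y P horth hne θprev θnew hθ
end
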